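/- Let H be the Bernstein–Lusztig–Hecke algebra of a Kac-Moody root datum over a field F, with basis (Z^λ H_w)_{λ∈Y, w∈W}. For every θ ∈ F[Y] (the span of the Z^λ) and every w ∈ W, the commutation defect θ * H_w − H_w * θ^{w⁻¹} lies in the span of the H_v * F[Y] with v < w in the Bruhat order. In particular, for each w, the span of {H_v Z^λ : v ≤ w, λ ∈ Y} is a finitely generated left F[Y]-submodule. -/

import Mathlib

/-!
The defect `Z^λ H_w - H_w Z^{w⁻¹λ}` is computed along a reduced word `w = s_i w'`: relation (BL4)
moves `Z^λ` past `H_{s_i}` at the cost of an element of `F[Y]`, and left multiplication by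
`H_{s_i}` sends `H_v F[Y]` with `v < w'` into `H_v F[Y] + H_{s_i v} F[Y]`, both below `w` by the
lifting property of the Bruhat order. Finite generation follows by induction on length, with the
finitely many `H_v`, `v ≤ w`, as generators.

The Bruhat order is defined through reflection chains; its agreement with the subword description
of the statement rests on the strong exchange condition, which comes from the sign representation
of `W` on `W × {±1}`: a word `ω` acts on `(x, ε)` by conjugating `x` with `π ω` and flipping `ε`
once for each occurrence of the conjugate in the left inversion sequence of `ω`.
-/

namespace CoxeterSystem

open List

variable {B W : Type*} [Group W] {M : CoxeterMatrix B} (cs : CoxeterSystem M W)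

local prefix:100 "s " => cs.simple
local prefix:100 "π " => cs.wordProd
local prefix:100 "ℓ " => cs.length
local prefix:100 "ris " => cs.rightInvSeq
local prefix:100 "lis " => cs.leftInvSeq

theorem simple_mul_mul_simple_eq_simple_iff (i : B) (x : W) : s i * x * s i = s i ↔ x = s i := by
  simpa [cs.inv_simple] using (MulAut.conj (s i)).injective.eq_iff (a := x) (b := s i)

theorem isReduced_cons_iff {i : B} {ω : List B} :
    cs.IsReduced (i :: ω) ↔ cs.IsReduced ω ∧ ℓ (π ω) < ℓ (s i * π ω) := by
  have := cs.length_simple_mul (π ω) i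
  have := cs.length_wordProd_le ω
  simp only [IsReduced, wordProd_cons, length_cons]
  omega

theorem leftInvSeq_alternatingWord (i j : B) (p : ℕ) :
    lis (alternatingWord i j (2 * p)) = (range (2 * p)).map fun k => s i * (s j * s i) ^ k := by
  refine ext_getElem (by simp) fun k hk _ => ?_
  have hk' : k < 2 * p := by simpa using hk
  rw [getElem_leftInvSeq_alternatingWord cs i j p k hk', prod_alternatingWord_eq_mul_pow,
    getElem_map, getElem_range, if_neg (Nat.not_even_two_mul_add_one k)]
  congr 2
  omega

section SignRepresentation

variable [DecidableEq W]

def signPermSimple (i : B) : Equiv.Perm (W × ℤˣ) :=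
  Function.Involutive.toPerm (fun p => (s i * p.1 * s i, if p.1 = s i then -p.2 else p.2)) <| by
    rintro ⟨x, ε⟩
    simp only [simple_mul_mul_simple_eq_simple_iff, Prod.mk.injEq]
    refine ⟨by simp [mul_assoc, cs.simple_mul_simple_cancel_left, cs.simple_mul_simple_self], ?_⟩
    split_ifs <;> simp

theorem signPermSimple_apply (i : B) (x : W) (ε : ℤˣ) :
    cs.signPermSimple i (x, ε) = (s i * x * s i, if x = s i then -ε else ε) := rfl

theorem prod_map_signPermSimple_apply (ω : List B) (x : W) (ε : ℤˣ) :
    (ω.map cs.signPermSimple).prod (x, ε) =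
      (π ω * x * (π ω)⁻¹, (-1) ^ (lis ω).count (π ω * x * (π ω)⁻¹) * ε) := by
  induction ω with
  | nil => simp
  | cons i ω ih =>
    set y := π ω * x * (π ω)⁻¹
    have hconj : ∀ z, MulAut.conj (s i) z = s i * z * s i := by simp [cs.inv_simple]
    have hy : π (i :: ω) * x * (π (i :: ω))⁻¹ = MulAut.conj (s i) y := by
      simp [y, wordProd_cons, mul_assoc, cs.inv_simple]
    rw [map_cons, prod_cons, Equiv.Perm.mul_apply, ih, hy, leftInvSeq, count_cons,
      count_map_of_injective _ _ (MulAut.conj (s i)).injective, hconj, signPermSimple_apply]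
    simp only [beq_iff_eq, eq_comm (a := s i), simple_mul_mul_simple_eq_simple_iff]
    split_ifs <;> simp [pow_succ]

theorem prod_map_alternatingWord_signPermSimple (i j : B) (p : ℕ) :
    ((alternatingWord i j (2 * p)).map cs.signPermSimple).prod =
      (cs.signPermSimple i * cs.signPermSimple j) ^ p := by
  induction p with
  | zero => simp [alternatingWord]
  | succ p ih =>
    rw [show 2 * (p + 1) = 2 * p + 1 + 1 by ring, alternatingWord_succ', alternatingWord_succ',
      pow_succ', ← ih]
    simp [mul_assoc]

theorem isLiftable_signPermSimple : M.IsLiftable cs.signPermSimple := by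
  intro i j
  have hm : (s j * s i) ^ M i j = 1 := M.symmetric i j ▸ cs.simple_mul_simple_pow j i
  have hcount (x : W) :
      Even (((range (2 * M i j)).map fun k => s i * (s j * s i) ^ k).count x) := by
    rw [two_mul, range_add, map_append, map_map, count_append]
    convert Even.add_self _ using 3
    refine map_congr_left fun k _ => ?_
    simp [pow_add, hm]
  ext ⟨x, ε⟩ : 2 <;>
  simp [← prod_map_alternatingWord_signPermSimple, prod_map_signPermSimple_apply,
    leftInvSeq_alternatingWord, prod_alternatingWord_eq_mul_pow, cs.simple_mul_simple_pow,
    (hcount _).neg_one_pow]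

def signPerm : W →* Equiv.Perm (W × ℤˣ) :=
  cs.lift ⟨cs.signPermSimple, cs.isLiftable_signPermSimple⟩

theorem signPerm_simple (i : B) : cs.signPerm (s i) = cs.signPermSimple i :=
  cs.lift_apply_simple _ i

theorem signPerm_wordProd_apply (ω : List B) (x : W) (ε : ℤˣ) :
    cs.signPerm (π ω) (x, ε) =
      (π ω * x * (π ω)⁻¹, (-1) ^ (lis ω).count (π ω * x * (π ω)⁻¹) * ε) := by
  rw [← prod_map_signPermSimple_apply]
  congr 1
  induction ω with
  | nil => simp
  | cons i ω ih => rw [wordProd_cons, map_mul, ih, map_cons, prod_cons, signPerm_simple]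

theorem signPerm_apply_neg (w x : W) (ε : ℤˣ) :
    cs.signPerm w (x, -ε) = ((cs.signPerm w (x, ε)).1, -(cs.signPerm w (x, ε)).2) := by
  obtain ⟨ω, -, rfl⟩ := cs.exists_isReduced w
  simp [signPerm_wordProd_apply]

theorem signPerm_apply_fst (w x : W) (ε : ℤˣ) : (cs.signPerm w (x, ε)).1 = w * x * w⁻¹ := by
  obtain ⟨ω, -, rfl⟩ := cs.exists_isReduced w
  simp [signPerm_wordProd_apply]

theorem IsReflection.signPerm_apply_self {t : W} (ht : cs.IsReflection t) :
    cs.signPerm t (t, 1) = (t, -1) := by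
  obtain ⟨u, i, rfl⟩ := ht
  set t := u * s i * u⁻¹
  set a := (cs.signPerm u⁻¹ (t, 1)).2
  have hp : cs.signPerm u⁻¹ (t, 1) = (s i, a) :=
    Prod.ext (by rw [signPerm_apply_fst]; simp [t, mul_assoc]) rfl
  calc cs.signPerm t (t, 1) = cs.signPerm u (cs.signPerm (s i) (cs.signPerm u⁻¹ (t, 1))) := by
        rw [map_mul, map_mul]; rfl
    _ = cs.signPerm u (s i, -a) := by
        rw [hp, signPerm_simple, signPermSimple_apply, if_pos rfl, cs.simple_mul_simple_self,
          one_mul]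
    _ = (t, -1) := by
        rw [signPerm_apply_neg, ← hp, ← Equiv.Perm.mul_apply, ← map_mul, mul_inv_cancel, map_one]
        rfl

end SignRepresentation

theorem mem_leftInvSeq_of_isLeftInversion (ω : List B) {t : W}
    (ht : cs.IsLeftInversion (π ω) t) : t ∈ lis ω := by
  classical
  obtain ⟨ν, hν, hνω⟩ := cs.exists_isReduced (t * π ω)
  have ht_notMem : t ∉ lis ν := fun h => by
    have := (cs.isLeftInversion_of_mem_leftInvSeq hν h).2
    rw [← hνω, ← mul_assoc, ht.1.mul_self, one_mul] at this
    exact lt_asymm this ht.2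
  -- Evaluate `signPerm (π ω)` at `(x, 1)` via `ω` and via `π ω = t * π ν`: only `t` flips the sign.
  by_contra ht_notMem'
  set x := (π ω)⁻¹ * t * π ω
  have hx_ω : cs.signPerm (π ω) (x, 1) = (t, 1) := by
    rw [signPerm_wordProd_apply, show π ω * x * (π ω)⁻¹ = t by simp [x, mul_assoc],
      count_eq_zero.mpr ht_notMem']
    simp
  have hx_ν : cs.signPerm (π ν) (x, 1) = (t, 1) := by
    rw [signPerm_wordProd_apply, show π ν * x * (π ν)⁻¹ = t by
      simp [← hνω, x, mul_assoc, ht.1.inv, ← mul_assoc t t, ht.1.mul_self],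
      count_eq_zero.mpr ht_notMem]
    simp
  have : ((t, 1) : W × ℤˣ) = (t, -1) := by
    rw [← hx_ω, ← ht.1.signPerm_apply_self, ← hx_ν, ← Equiv.Perm.mul_apply, ← map_mul, ← hνω,
      ← mul_assoc, ht.1.mul_self, one_mul]
  exact (by decide : (1 : ℤˣ) ≠ -1) (congrArg Prod.snd this)

theorem mem_rightInvSeq_of_isRightInversion (ω : List B) {t : W}
    (ht : cs.IsRightInversion (π ω) t) : t ∈ ris ω := by
  have := cs.mem_leftInvSeq_of_isLeftInversion ω.reverse
    (by rwa [wordProd_reverse, isLeftInversion_inv_iff])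
  rwa [leftInvSeq_reverse, mem_reverse] at this

theorem exists_wordProd_eraseIdx_eq_mul (ω : List B) {t : W}
    (ht : cs.IsRightInversion (π ω) t) : ∃ j, π (ω.eraseIdx j) = π ω * t := by
  obtain ⟨j, hj, rfl⟩ := getElem_of_mem (cs.mem_rightInvSeq_of_isRightInversion ω ht)
  exact ⟨j, by rw [← wordProd_mul_getD_rightInvSeq, getD_eq_getElem]⟩

theorem exists_isReduced_sublist (ω : List B) :
    ∃ ρ, ρ.Sublist ω ∧ cs.IsReduced ρ ∧ π ρ = π ω := by
  induction ω with
  | nil => exact ⟨[], .slnil, by simp [IsReduced], rfl⟩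
  | cons i ω ih =>
    obtain ⟨ρ, hρω, hρ, hπ⟩ := ih
    rw [wordProd_cons, ← hπ]
    rcases cs.length_simple_mul (π ρ) i with hasc | hdesc
    · exact ⟨i :: ρ, hρω.cons_cons i, cs.isReduced_cons_iff.mpr ⟨hρ, by omega⟩, wordProd_cons ..⟩
    · obtain ⟨j, hj, hji⟩ := getElem_of_mem (cs.mem_leftInvSeq_of_isLeftInversion ρ
        ⟨cs.isReflection_simple i, by omega⟩)
      have hρj : π (ρ.eraseIdx j) = s i * π ρ := by
        rw [← getD_leftInvSeq_mul_wordProd, getD_eq_getElem _ _ hj, hji]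
      have hj' : j < ρ.length := by simpa using hj
      refine ⟨ρ.eraseIdx j, (eraseIdx_sublist ρ j).trans (hρω.cons i), ?_, hρj⟩
      have := length_eraseIdx_add_one hj'
      rw [IsReduced, hρj]
      rw [IsReduced] at hρ
      omega

theorem IsRightInversion.simple_mul {y t : W} (ht : cs.IsRightInversion y t) (i : B)
    (hne : s i * y * t ≠ y) : cs.IsRightInversion (s i * y) t := by
  obtain ⟨μ, hμ, hμy⟩ := cs.exists_isReduced (s i * y)
  have hy : y = π (i :: μ) := by rw [wordProd_cons, ← hμy, simple_mul_simple_cancel_left]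
  have := cs.mem_rightInvSeq_of_isRightInversion (i :: μ) (hy ▸ ht)
  rw [rightInvSeq, mem_cons] at this
  rcases this with rfl | h
  · exact absurd (by simp [← hμy, mul_assoc, simple_mul_simple_cancel_left]) hne
  · rw [hμy]
    exact cs.isRightInversion_of_mem_rightInvSeq hμ h

section BruhatOrder

def BruhatStep (x y : W) : Prop := ∃ t, cs.IsReflection t ∧ y = x * t ∧ ℓ x < ℓ y

def BruhatLE : W → W → Prop := Relation.ReflTransGen cs.BruhatStep

def BruhatLT (x y : W) : Prop := cs.BruhatLE x y ∧ x ≠ y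

variable {cs}

theorem bruhatStep_reflection_mul {x t : W} (ht : cs.IsReflection t) (h : ℓ x < ℓ (t * x)) :
    cs.BruhatStep x (t * x) :=
  ⟨x⁻¹ * t * x, by simpa using ht.conj x⁻¹, by group, h⟩

theorem bruhatLE_simple_mul {x : W} {i : B} (h : ℓ x < ℓ (s i * x)) : cs.BruhatLE x (s i * x) :=
  .single (bruhatStep_reflection_mul (cs.isReflection_simple i) h)

theorem simple_mul_bruhatLE {x : W} {i : B} (h : ℓ (s i * x) < ℓ x) : cs.BruhatLE (s i * x) x := by
  have := bruhatLE_simple_mul (x := s i * x) (i := i) (by rwa [simple_mul_simple_cancel_left])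
  rwa [simple_mul_simple_cancel_left] at this

theorem BruhatLE.eq_or_length_lt {x y : W} (h : cs.BruhatLE x y) : x = y ∨ ℓ x < ℓ y := by
  induction h with
  | refl => exact .inl rfl
  | tail _ hstep ih =>
    obtain ⟨t, -, rfl, hlt⟩ := hstep
    rcases ih with rfl | h
    · exact .inr hlt
    · exact .inr (h.trans hlt)

theorem BruhatLE.length_le {x y : W} (h : cs.BruhatLE x y) : ℓ x ≤ ℓ y := by
  rcases h.eq_or_length_lt with rfl | h
  exacts [le_rfl, h.le]

theorem BruhatLT.length_lt {x y : W} (h : cs.BruhatLT x y) : ℓ x < ℓ y :=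
  h.1.eq_or_length_lt.resolve_left h.2

theorem BruhatLT.trans_le {x y z : W} (hxy : cs.BruhatLT x y) (hyz : cs.BruhatLE y z) :
    cs.BruhatLT x z :=
  ⟨hxy.1.trans hyz, fun h => (hxy.length_lt.trans_le hyz.length_le).ne (congrArg _ h)⟩

theorem BruhatLE.trans_lt {x y z : W} (hxy : cs.BruhatLE x y) (hyz : cs.BruhatLT y z) :
    cs.BruhatLT x z :=
  ⟨hxy.trans hyz.1, fun h => (hxy.length_le.trans_lt hyz.length_lt).ne (congrArg _ h)⟩

theorem bruhatLE_iff_eq_or_bruhatLT {x y : W} : cs.BruhatLE x y ↔ x = y ∨ cs.BruhatLT x y := by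
  constructor
  · intro h
    by_cases hxy : x = y
    exacts [.inl hxy, .inr ⟨h, hxy⟩]
  · rintro (rfl | h)
    exacts [.refl, h.1]

theorem BruhatLE.simple_mul {x y : W} (h : cs.BruhatLE x y) (i : B) (hy : ℓ y < ℓ (s i * y)) :
    cs.BruhatLE (s i * x) (s i * y) := by
  -- Along a chain from `x`, `s i * x` stays below the longer of `y` and `s i * y`.
  suffices key : ∀ y, cs.BruhatLE x y →
      cs.BruhatLE (s i * x) (if ℓ y < ℓ (s i * y) then s i * y else y) by
    simpa [hy] using key y h
  intro y h
  induction h with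
  | refl =>
    split_ifs with hx
    · exact .refl
    · exact simple_mul_bruhatLE (by have := cs.length_simple_mul x i; omega)
  | @tail z y _ hstep ih =>
    refine ih.trans ?_
    obtain ⟨t, ht, rfl, hzy⟩ := hstep
    have hz := cs.length_simple_mul z i
    have hy := cs.length_simple_mul (z * t) i
    split_ifs with hzi hyi hyi
    · exact .single ⟨t, ht, by rw [mul_assoc], by omega⟩
    · by_cases hsz : s i * z = z * t
      · rw [hsz]
      have hszt : s i * (z * t) * t = s i * z := by rw [mul_assoc, mul_assoc, ht.mul_self, mul_one]
      have hinv : cs.IsRightInversion (s i * (z * t)) t :=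
        IsRightInversion.simple_mul cs ⟨ht, by rwa [mul_assoc, ht.mul_self, mul_one]⟩ i
          (by rwa [hszt])
      refine .trans (.single ⟨t, ht, by rw [mul_assoc], ?_⟩) (simple_mul_bruhatLE (by omega))
      simpa [hszt] using hinv.2
    · exact (Relation.ReflTransGen.single ⟨t, ht, rfl, hzy⟩).trans (bruhatLE_simple_mul (by omega))
    · exact .single ⟨t, ht, rfl, hzy⟩

theorem bruhatLE_wordProd_of_sublist {ω ρ : List B} (hω : cs.IsReduced ω) (hρ : ρ.Sublist ω) :
    cs.BruhatLE (π ρ) (π ω) := by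
  induction ω generalizing ρ with
  | nil => rw [sublist_nil.mp hρ]; exact .refl
  | cons i ω ih =>
    obtain ⟨hω', hasc⟩ := cs.isReduced_cons_iff.mp hω
    rw [wordProd_cons]
    rcases sublist_cons_iff.mp hρ with hρω | ⟨ρ, rfl, hρω⟩
    · exact (ih hω' hρω).trans (bruhatLE_simple_mul hasc)
    · rw [wordProd_cons]
      exact (ih hω' hρω).simple_mul i hasc

theorem BruhatLE.exists_sublist {x y : W} (h : cs.BruhatLE x y) {ω : List B}
    (hω : cs.IsReduced ω) (hωy : π ω = y) : ∃ ρ, ρ.Sublist ω ∧ cs.IsReduced ρ ∧ π ρ = x := by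
  induction h generalizing ω with
  | refl => exact ⟨ω, .refl ω, hω, hωy⟩
  | tail _ hstep ih =>
    obtain ⟨t, ht, rfl, hlt⟩ := hstep
    obtain ⟨j, hj⟩ := cs.exists_wordProd_eraseIdx_eq_mul ω (t := t)
      ⟨ht, by rwa [hωy, mul_assoc, ht.mul_self, mul_one]⟩
    obtain ⟨ρ', hρ'ω, hρ', hρ'π⟩ := cs.exists_isReduced_sublist (ω.eraseIdx j)
    obtain ⟨ρ, hρρ', hρ, hρπ⟩ := ih hρ' (by rw [hρ'π, hj, hωy, mul_assoc, ht.mul_self, mul_one])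
    exact ⟨ρ, hρρ'.trans (hρ'ω.trans (eraseIdx_sublist ω j)), hρ, hρπ⟩

theorem bruhatLE_iff_forall_sublist {x y : W} : cs.BruhatLE x y ↔
    ∀ ω, cs.IsReduced ω → π ω = y → ∃ ρ, ρ.Sublist ω ∧ cs.IsReduced ρ ∧ π ρ = x := by
  refine ⟨fun h ω hω hωy => h.exists_sublist hω hωy, fun h => ?_⟩
  obtain ⟨ω, hω, rfl⟩ := cs.exists_isReduced y
  obtain ⟨ρ, hρ, -, rfl⟩ := h ω hω rfl
  exact bruhatLE_wordProd_of_sublist hω hρ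

theorem finite_setOf_bruhatLE (w : W) : {x | cs.BruhatLE x w}.Finite := by
  obtain ⟨ω, hω, rfl⟩ := cs.exists_isReduced w
  refine (ω.sublists.finite_toSet.image cs.wordProd).subset fun x hx => ?_
  obtain ⟨ρ, hρ, -, rfl⟩ := BruhatLE.exists_sublist hx hω rfl
  exact ⟨ρ, mem_sublists.mpr hρ, rfl⟩

end BruhatOrder

end CoxeterSystem

section HeckeCommutation

open CoxeterSystem Submodule

variable {W : Type*} (F : Type*) {H Y : Type*} [CommRing F] [Ring H] [Algebra F H]

def spanTZ (T : W → H) (Z : Y → H) (p : W → Prop) : Submodule F H :=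
  span F {x | ∃ v lam, p v ∧ x = T v * Z lam}

variable {F} {T : W → H} {Z : Y → H}

theorem spanTZ_mono {p q : W → Prop} (h : ∀ v, p v → q v) : spanTZ F T Z p ≤ spanTZ F T Z q :=
  span_mono fun _ ⟨v, lam, hv, hx⟩ => ⟨v, lam, h v hv, hx⟩

variable {B : Type*} [Group W] {M : CoxeterMatrix B} {cs : CoxeterSystem M W}

local prefix:100 "s " => cs.simple
local prefix:100 "ℓ " => cs.length

theorem T_simple_mul_mem_spanTZ (hmul : ∀ i v, ∃ c : F, T (s i) * T v = c • T v + T (s i * v))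
    {i : B} {u : W} (hu : ℓ u < ℓ (s i * u)) {x : H} (hx : x ∈ spanTZ F T Z (cs.BruhatLT · u)) :
    T (s i) * x ∈ spanTZ F T Z (cs.BruhatLT · (s i * u)) := by
  have : (spanTZ F T Z (cs.BruhatLT · u)).map (LinearMap.mulLeft F (T (s i))) ≤
      spanTZ F T Z (cs.BruhatLT · (s i * u)) := by
    rw [spanTZ, map_span, span_le]
    rintro _ ⟨_, ⟨v, lam, hv, rfl⟩, rfl⟩
    obtain ⟨c, hc⟩ := hmul i v
    rw [LinearMap.mulLeft_apply, ← mul_assoc, hc, add_mul, smul_mul_assoc]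
    exact add_mem (smul_mem _ c (subset_span ⟨v, lam, hv.trans_le (bruhatLE_simple_mul hu), rfl⟩))
      (subset_span ⟨s i * v, lam, ⟨hv.1.simple_mul i hu, fun h => hv.2 (mul_left_cancel h)⟩, rfl⟩)
  exact this ⟨x, hx, rfl⟩

variable [MulAction W Y]

theorem mul_T_mem_spanTZ {u : W}
    (hD : ∀ lam, Z lam * T u - T u * Z (u⁻¹ • lam) ∈ spanTZ F T Z (cs.BruhatLT · u)) {q : H}
    (hq : q ∈ span F (Set.range Z)) : q * T u ∈ spanTZ F T Z (cs.BruhatLE · u) := by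
  have : (span F (Set.range Z)).map (LinearMap.mulRight F (T u)) ≤
      spanTZ F T Z (cs.BruhatLE · u) := by
    rw [map_span, span_le]
    rintro _ ⟨_, ⟨lam, rfl⟩, rfl⟩
    rw [LinearMap.mulRight_apply, ← sub_add_cancel (Z lam * T u) (T u * Z (u⁻¹ • lam))]
    exact add_mem (spanTZ_mono (fun v hv => hv.1) (hD lam))
      (subset_span ⟨u, _, .refl, rfl⟩)
  exact this ⟨q, hq, rfl⟩

theorem Z_mul_T_sub_T_mul_Z_mem (hT1 : T 1 = 1)
    (hasc : ∀ i w, ℓ w < ℓ (s i * w) → T (s i) * T w = T (s i * w))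
    (hmul : ∀ i v, ∃ c : F, T (s i) * T v = c • T v + T (s i * v))
    (hBL4 : ∀ i lam, T (s i) * Z lam - Z (s i • lam) * T (s i) ∈ span F (Set.range Z))
    (u : W) (lam : Y) : Z lam * T u - T u * Z (u⁻¹ • lam) ∈ spanTZ F T Z (cs.BruhatLT · u) := by
  obtain ⟨ω, hω, rfl⟩ := cs.exists_isReduced u
  induction ω generalizing lam with
  | nil => simp [hT1]
  | cons i ω ih =>
    obtain ⟨hω', hu⟩ := cs.isReduced_cons_iff.mp hω
    set u := cs.wordProd ω
    have hsplit : Z lam * T (s i * u) - T (s i * u) * Z ((s i * u)⁻¹ • lam) =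
        T (s i) * (Z (s i • lam) * T u - T u * Z (u⁻¹ • s i • lam)) -
          (T (s i) * Z (s i • lam) - Z (s i • s i • lam) * T (s i)) * T u := by
      rw [smul_smul (s i) (s i), simple_mul_simple_self, one_smul, mul_inv_rev, inv_simple,
        mul_smul, ← hasc i u hu]
      noncomm_ring
    have hu_lt : cs.BruhatLT u (s i * u) := ⟨bruhatLE_simple_mul hu, fun h => hu.ne (congrArg _ h)⟩
    rw [wordProd_cons, hsplit]
    exact sub_mem (T_simple_mul_mem_spanTZ hmul hu (ih _ hω'))
      (spanTZ_mono (fun v hv => hv.trans_lt hu_lt) (mul_T_mem_spanTZ (ih · hω') (hBL4 i _)))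

theorem sum_smul_Z_mul_T_sub_mem {S : Submodule F H} {w : W}
    (hD : ∀ lam, Z lam * T w - T w * Z (w⁻¹ • lam) ∈ S) (c : Y →₀ F) :
    (c.sum fun lam a => a • Z lam) * T w - T w * (c.sum fun lam a => a • Z (w⁻¹ • lam)) ∈ S := by
  rw [Finsupp.sum_mul, Finsupp.mul_sum, ← Finsupp.sum_sub]
  refine sum_mem fun lam _ => ?_
  dsimp only
  rw [smul_mul_assoc, mul_smul_comm, ← smul_sub]
  exact smul_mem _ _ (hD lam)

theorem exists_finset_spanTZ_eq
    (hD : ∀ u lam, Z lam * T u - T u * Z (u⁻¹ • lam) ∈ spanTZ F T Z (cs.BruhatLT · u)) (w : W) :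
    ∃ gens : Finset H, spanTZ F T Z (cs.BruhatLE · w) =
      span F {x | ∃ θ ∈ span F (Set.range Z), ∃ g ∈ gens, x = θ * g} := by
  classical
  refine ⟨(finite_setOf_bruhatLE (cs := cs) w).toFinset.image T, le_antisymm ?_ ?_⟩
  · rw [spanTZ, span_le]
    rintro _ ⟨v, lam, hv, rfl⟩
    induction hn : ℓ v using Nat.strong_induction_on generalizing v lam with
    | _ n ih =>
      have hsplit : T v * Z lam =
          Z (v • lam) * T v - (Z (v • lam) * T v - T v * Z (v⁻¹ • v • lam)) := by
        rw [inv_smul_smul, sub_sub_cancel]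
      rw [SetLike.mem_coe, hsplit]
      refine sub_mem (subset_span ⟨_, subset_span ⟨v • lam, rfl⟩, T v,
        Finset.mem_image_of_mem T (by simpa using hv), rfl⟩) (span_le.mpr ?_ (hD v (v • lam)))
      rintro _ ⟨x, mu, hx, rfl⟩
      exact ih _ (hn ▸ hx.length_lt) x mu (hx.1.trans hv) rfl
  · rw [span_le]
    rintro _ ⟨θ, hθ, g, hg, rfl⟩
    obtain ⟨u, hu, rfl⟩ := Finset.mem_image.mp hg
    have hu : cs.BruhatLE u w := by simpa using hu
    exact spanTZ_mono (fun x hx => hx.trans hu) (mul_T_mem_spanTZ (hD u) hθ)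

end HeckeCommutation

theorem stmt11_general {F : Type*} [Field F] {B W : Type*} [Group W] {M : CoxeterMatrix B}
    (cs : CoxeterSystem M W)
    {Y : Type*} [AddCommGroup Y] (act : W →* Multiplicative (AddAut Y))
    {H : Type*} [Ring H] [Algebra F H]
    (σ : B → Fˣ) (Z : Y → H) (T : W → H)
    (hT1 : T 1 = 1)
    (hBL2 : ∀ (i : B) (w : W), T (cs.simple i) * T w =
      if cs.length (cs.simple i * w) = cs.length w + 1 then T (cs.simple i * w)
      else ((σ i : F) - (↑(σ i)⁻¹ : F)) • T w + T (cs.simple i * w))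
    (hBL4 : ∀ (i : B) (lam : Y),
      T (cs.simple i) * Z lam - Z (Multiplicative.toAdd (act (cs.simple i)) lam) * T (cs.simple i)
        ∈ Submodule.span F (Set.range Z))
    (blt : W → W → Prop)
    (hblt : ∀ u w : W, blt u w ↔ (u ≠ w ∧
      ∀ ω : List B, cs.IsReduced ω → cs.wordProd ω = w →
        ∃ ω' : List B, ω'.Sublist ω ∧ cs.IsReduced ω' ∧ cs.wordProd ω' = u))
    (c : Y →₀ F) (w : W) :
    ((c.sum fun lam a => a • Z lam) * T w
        - T w * (c.sum fun lam a => a • Z (Multiplicative.toAdd (act w⁻¹) lam))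
      ∈ Submodule.span F {x : H | ∃ v lam, blt v w ∧ x = T v * Z lam}) ∧
    ∃ gens : Finset H,
      Submodule.span F {x : H | ∃ v lam, (v = w ∨ blt v w) ∧ x = T v * Z lam} =
      Submodule.span F
        {x : H | ∃ θ ∈ Submodule.span F (Set.range Z), ∃ g ∈ gens, x = θ * g} := by
  -- With this action, `w • lam` is definitionally `Multiplicative.toAdd (act w) lam`.
  let _ : MulAction W Y := MulAction.compHom Y act
  obtain rfl : blt = cs.BruhatLT := by
    ext v u
    rw [hblt, CoxeterSystem.BruhatLT, CoxeterSystem.bruhatLE_iff_forall_sublist, and_comm]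
  have hasc (i : B) (v : W) (h : cs.length v < cs.length (cs.simple i * v)) :
      T (cs.simple i) * T v = T (cs.simple i * v) := by
    rw [hBL2, if_pos (by have := cs.length_simple_mul v i; omega)]
  have hmul (i : B) (v : W) : ∃ c : F, T (cs.simple i) * T v = c • T v + T (cs.simple i * v) := by
    rw [hBL2]
    split_ifs
    exacts [⟨0, by simp⟩, ⟨_, rfl⟩]
  have hD := Z_mul_T_sub_T_mul_Z_mem hT1 hasc hmul hBL4
  refine ⟨sum_smul_Z_mul_T_sub_mem (hD w) c, ?_⟩
  simp_rw [← CoxeterSystem.bruhatLE_iff_eq_or_bruhatLT]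
  exact exists_finset_spanTZ_eq hD w

/-- In the Bernstein–Lusztig–Hecke algebra `H` (an `F`-algebra with basis `(Z^λ H_w)`
satisfying the Bernstein–Lusztig relations), for every `θ ∈ F[Y]` and every `w`, the
commutation defect `θ * H_w − H_w * θ^{w⁻¹}` lies in `⊕_{v < w} H_v F[Y]` (Bruhat order);
in particular, the span of `{H_v Z^λ : v ≤ w}` is a finitely generated left `F[Y]`-module. -/
theorem stmt11 {F : Type*} [Field F] {B W : Type*} [Group W] {M : CoxeterMatrix B}
    (cs : CoxeterSystem M W)
    {Y : Type*} [AddCommGroup Y] (act : W →* Multiplicative (AddAut Y))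
    {H : Type*} [Ring H] [Algebra F H]
    (σ : B → Fˣ) (Z : Y → H) (T : W → H)
    (hind : LinearIndependent F (fun p : Y × W => Z p.1 * T p.2))
    (hspan : Submodule.span F (Set.range fun p : Y × W => Z p.1 * T p.2) = ⊤)
    (hT1 : T 1 = 1) (hZ0 : Z 0 = 1)
    (hBL2 : ∀ (i : B) (w : W), T (cs.simple i) * T w =
      if cs.length (cs.simple i * w) = cs.length w + 1 then T (cs.simple i * w)
      else ((σ i : F) - (↑(σ i)⁻¹ : F)) • T w + T (cs.simple i * w))
    (hBL3 : ∀ lam mu : Y, Z lam * Z mu = Z (lam + mu))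
    (hBL4 : ∀ (i : B) (lam : Y),
      T (cs.simple i) * Z lam - Z (Multiplicative.toAdd (act (cs.simple i)) lam) * T (cs.simple i)
        ∈ Submodule.span F (Set.range Z))
    (blt : W → W → Prop)
    (hblt : ∀ u w : W, blt u w ↔ (u ≠ w ∧
      ∀ ω : List B, cs.IsReduced ω → cs.wordProd ω = w →
        ∃ ω' : List B, ω'.Sublist ω ∧ cs.IsReduced ω' ∧ cs.wordProd ω' = u))
    (c : Y →₀ F) (w : W) :
    ((c.sum fun lam a => a • Z lam) * T w
        - T w * (c.sum fun lam a => a • Z (Multiplicative.toAdd (act w⁻¹) lam))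
      ∈ Submodule.span F {x : H | ∃ v lam, blt v w ∧ x = T v * Z lam}) ∧
    ∃ gens : Finset H,
      Submodule.span F {x : H | ∃ v lam, (v = w ∨ blt v w) ∧ x = T v * Z lam} =
      Submodule.span F
        {x : H | ∃ θ ∈ Submodule.span F (Set.range Z), ∃ g ∈ gens, x = θ * g} :=
  stmt11_general cs act σ Z T hT1 hBL2 hBL4 blt hblt c w
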